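/- arXiv:1006.2291 — 2 statements merged into one kernel-verified Lean document; each statement's English description precedes it below -/
import Mathlib

section
/- Let (W,S) be a Coxeter system. The operation * is associative: for all w, w', w'' ∈ W one has (w * w') * w'' = w * (w' * w''). -/
/-!
Both `(w * w') * w''` and `w * (w' * w'')` turn out to be the maximum of
`{u u' u'' : u ≤ w, u' ≤ w', u'' ≤ w''}`, so they have the same Bruhat lower set. The point is
that `x ≤ u u'` with `u ≤ w`, `u' ≤ w'` forces `x = a a'` with `a ≤ w`, `a' ≤ w'`: writing `u`,
`u'` as subwords of reduced words for `w`, `w'`, the element `x` is a subword of their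
(possibly non-reduced) concatenation, by the subword property.

The subword property, that `x ≤ y` makes `x` a subword of *every* word for `y`, goes through the
description of `≤` by chains `y ↦ y t` (`t` a reflection, length increasing) and the lifting
lemma for left multiplication by a simple reflection. Both rest on the strong exchange
condition, which is read off Tits' sign representation of `W` on `W × {±1}`.
-/

open CoxeterSystem

variable {B : Type*} {W : Type*}

/-- The Bruhat order on a Coxeter group: `u ≤ w` iff some reduced word for `w`
contains a subword (i.e. a sublist) that is a reduced word for `u`. -/
def BruhatLE [Group W] {M : CoxeterMatrix B} (cs : CoxeterSystem M W) (u w : W) : Prop :=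
  ∃ ω : List B, cs.IsReduced ω ∧ cs.wordProd ω = w ∧
    ∃ ω' : List B, ω'.Sublist ω ∧ cs.IsReduced ω' ∧ cs.wordProd ω' = u

/-- `IsDemazureProd cs w w' m` says that `m` is the maximal element, with respect to
the Bruhat order, of the set `{u u' : u ≤ w, u' ≤ w'}`; i.e. `m = w * w'`. -/
def IsDemazureProd [Group W] {M : CoxeterMatrix B} (cs : CoxeterSystem M W)
    (w w' m : W) : Prop :=
  (∃ u u' : W, BruhatLE cs u w ∧ BruhatLE cs u' w' ∧ m = u * u') ∧
  (∀ u u' : W, BruhatLE cs u w → BruhatLE cs u' w' → BruhatLE cs (u * u') m)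

open List

namespace CoxeterSystem

variable [Group W] {M : CoxeterMatrix B} (cs : CoxeterSystem M W)

local prefix:100 "s " => cs.simple
local prefix:100 "π " => cs.wordProd
local prefix:100 "ℓ " => cs.length
local prefix:100 "ris " => cs.rightInvSeq

/- Tits' sign representation: `s i` acts on `W × ℤˣ` by conjugating the first coordinate and
flipping the sign exactly at `s i`. Along a word `ω` it flips the sign of `t` once for every
occurrence of `t` in the right inversion sequence of `ω` (`prod_map_simplePerm_apply`), so the
parity of that number of occurrences depends only on `π ω`. -/
open Classical in
noncomputable def simplePermFun (i : B) (p : W × ℤˣ) : W × ℤˣ :=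
  (s i * p.1 * s i, if p.1 = s i then -p.2 else p.2)

theorem simplePermFun_involutive (i : B) : Function.Involutive (cs.simplePermFun i) := by
  rintro ⟨t, ε⟩
  have hconj : s i * t * s i = s i ↔ t = s i := by
    rw [mul_eq_right, mul_eq_one_iff_eq_inv', cs.inv_simple]
  by_cases ht : t = s i
  · simp [simplePermFun, ht, cs.simple_mul_simple_self]
  · simp [simplePermFun, ht, hconj, ← mul_assoc, cs.simple_mul_simple_self]

noncomputable def simplePerm (i : B) : Equiv.Perm (W × ℤˣ) :=
  (cs.simplePermFun_involutive i).toPerm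

open Classical in
theorem prod_map_simplePerm_apply (ω : List B) (t : W) (ε : ℤˣ) :
    (ω.map cs.simplePerm).prod (t, ε) =
      (π ω * t * (π ω)⁻¹, (-1) ^ (ris ω).count t * ε) := by
  induction ω with
  | nil => simp
  | cons i ω ih =>
    have hmem : π ω * t * (π ω)⁻¹ = s i ↔ (π ω)⁻¹ * s i * π ω = t :=
      ⟨fun h => by rw [← h]; group, fun h => by rw [← h]; group⟩
    simp only [map_cons, prod_cons, Equiv.Perm.mul_apply, ih, rightInvSeq, count_cons,
      wordProd_cons, simplePerm, Function.Involutive.coe_toPerm, simplePermFun, hmem, beq_iff_eq]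
    refine Prod.ext (by simp [mul_assoc]) ?_
    by_cases h : (π ω)⁻¹ * s i * π ω = t <;> simp [h, pow_succ]

theorem wordProd_flatten_replicate (i j : B) (k : ℕ) :
    π (replicate k [i, j]).flatten = (s i * s j) ^ k := by
  induction k with
  | zero => simp
  | succ k ih => rw [replicate_succ, flatten_cons, wordProd_append, ih, pow_succ']; simp [wordProd]

theorem rightInvSeq_flatten_replicate (i j : B) (k : ℕ) :
    ris (replicate k [i, j]).flatten =
      ((range (2 * k)).map fun l => s j * (s i * s j) ^ l).reverse := by
  induction k with
  | zero => simp
  | succ k ih =>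
    rw [replicate_succ, flatten_cons, show 2 * (k + 1) = 2 * k + 1 + 1 by ring]
    simp only [cons_append, nil_append, rightInvSeq, ih, range_succ, map_append, map_cons,
      map_nil, reverse_append, reverse_singleton, wordProd_cons, wordProd_flatten_replicate,
      cons.injEq, and_true]
    have hsemi : ((s i * s j) ^ k)⁻¹ * s j = s j * (s i * s j) ^ k := by
      have h : SemiconjBy (s j) (s i * s j) (s i * s j)⁻¹ := by simp [SemiconjBy, mul_assoc]
      rw [← inv_pow]
      exact (h.pow_right k).eq.symm
    constructor
    · calc (s j * (s i * s j) ^ k)⁻¹ * s i * (s j * (s i * s j) ^ k)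
          = ((s i * s j) ^ k)⁻¹ * s j * (s i * s j) * (s i * s j) ^ k := by
            simp only [mul_inv_rev, cs.inv_simple, mul_assoc]
        _ = s j * (s i * s j) ^ (2 * k + 1) := by
            rw [hsemi, mul_assoc, mul_assoc, ← pow_succ', ← pow_add]; ring_nf
    · rw [hsemi, mul_assoc, ← pow_add, two_mul]

/- The reflections `s j (s i s j) ^ l` have period `M i j` in `l`, so the right inversion
sequence of the braid relator `(i j) ^ M i j` lists each of them twice and all signs cancel. -/
theorem isLiftable_simplePerm : M.IsLiftable cs.simplePerm := by
  classical
  intro i j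
  set m := M i j
  have hword : (cs.simplePerm i * cs.simplePerm j) ^ m =
      ((replicate m [i, j]).flatten.map cs.simplePerm).prod := by
    simp [map_flatten, prod_flatten, prod_replicate]
  have hperiod : ∀ l, s j * (s i * s j) ^ (m + l) = s j * (s i * s j) ^ l := by
    intro l; rw [pow_add, cs.simple_mul_simple_pow, one_mul]
  refine Equiv.ext fun ⟨t, ε⟩ => ?_
  rw [hword, prod_map_simplePerm_apply, wordProd_flatten_replicate, cs.simple_mul_simple_pow,
    rightInvSeq_flatten_replicate, count_reverse, two_mul, range_add, map_append, map_map]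
  simp only [Function.comp_def, hperiod, count_append, Even.neg_one_pow (Even.add_self _)]
  simp

noncomputable def signRep : W →* Equiv.Perm (W × ℤˣ) := cs.lift ⟨_, cs.isLiftable_simplePerm⟩

theorem signRep_wordProd (ω : List B) : cs.signRep (π ω) = (ω.map cs.simplePerm).prod := by
  rw [wordProd, map_list_prod, map_map]
  congr 1
  exact map_congr_left fun i _ => cs.lift_apply_simple _ i

noncomputable def reflSign (w t : W) : ℤˣ := (cs.signRep w (t, 1)).2

open Classical in
theorem reflSign_wordProd (ω : List B) (t : W) :
    cs.reflSign (π ω) t = (-1) ^ (ris ω).count t := by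
  rw [reflSign, signRep_wordProd, prod_map_simplePerm_apply, mul_one]

theorem signRep_apply (w t : W) (ε : ℤˣ) :
    cs.signRep w (t, ε) = (w * t * w⁻¹, cs.reflSign w t * ε) := by
  obtain ⟨ω, rfl⟩ := cs.wordProd_surjective w
  rw [signRep_wordProd, prod_map_simplePerm_apply, reflSign_wordProd]

theorem reflSign_mul (a b t : W) :
    cs.reflSign (a * b) t = cs.reflSign a (b * t * b⁻¹) * cs.reflSign b t := by
  have h := congrArg Prod.snd (DFunLike.congr_fun (map_mul cs.signRep a b) (t, 1))
  rwa [Equiv.Perm.mul_apply, signRep_apply _ b, signRep_apply _ a, mul_one] at h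

theorem reflSign_one (t : W) : cs.reflSign 1 t = 1 := by
  simp [reflSign]

theorem reflSign_simple (i : B) : cs.reflSign (s i) (s i) = -1 := by
  classical
  simpa using cs.reflSign_wordProd [i] (s i)

theorem reflSign_self {t : W} (ht : cs.IsReflection t) : cs.reflSign t t = -1 := by
  obtain ⟨u, i, rfl⟩ := ht
  have hinv : cs.reflSign u (s i) * cs.reflSign u⁻¹ (u * s i * u⁻¹) = 1 := by
    simpa [reflSign_one, mul_assoc] using (cs.reflSign_mul u u⁻¹ (u * s i * u⁻¹)).symm
  rw [cs.reflSign_mul, cs.reflSign_mul u]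
  simpa [mul_assoc, reflSign_simple] using hinv

theorem reflSign_mul_self {t : W} (ht : cs.IsReflection t) (w : W) :
    cs.reflSign (w * t) t = -cs.reflSign w t := by
  rw [reflSign_mul, mul_inv_cancel_right, cs.reflSign_self ht, mul_neg_one]

theorem mem_rightInvSeq_of_reflSign_eq_neg_one {ω : List B} {t : W}
    (h : cs.reflSign (π ω) t = -1) : t ∈ ris ω := by
  classical
  by_contra hmem
  rw [reflSign_wordProd, count_eq_zero_of_not_mem hmem, pow_zero] at h
  exact absurd h (by decide)

theorem reflSign_eq_neg_one_iff {t : W} (ht : cs.IsReflection t) (w : W) :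
    cs.reflSign w t = -1 ↔ ℓ (w * t) < ℓ w := by
  have descent : ∀ v : W, cs.reflSign v t = -1 → ℓ (v * t) < ℓ v := by
    intro v hv
    obtain ⟨ω, hω, rfl⟩ := cs.exists_isReduced v
    exact (cs.isRightInversion_of_mem_rightInvSeq hω
      (cs.mem_rightInvSeq_of_reflSign_eq_neg_one hv)).2
  refine ⟨descent w, fun h => (Int.units_eq_one_or _).resolve_left fun h₁ => ?_⟩
  have := descent (w * t) (by rw [reflSign_mul_self _ ht, h₁])
  rw [mul_assoc, ht.mul_self, mul_one] at this
  omega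

theorem exists_wordProd_eraseIdx_eq_mul {ω : List B} {t : W} (ht : cs.IsReflection t)
    (h : ℓ (π ω * t) < ℓ (π ω)) : ∃ j < ω.length, π (ω.eraseIdx j) = π ω * t := by
  obtain ⟨j, hj, rfl⟩ := mem_iff_getElem.mp
    (cs.mem_rightInvSeq_of_reflSign_eq_neg_one ((cs.reflSign_eq_neg_one_iff ht _).mpr h))
  refine ⟨j, by simpa using hj, ?_⟩
  rw [← cs.wordProd_mul_getD_rightInvSeq, getD_eq_getElem _ _ hj]

theorem exists_reduced_sublist (ω : List B) : ∃ τ, τ <+ ω ∧ cs.IsReduced τ ∧ π τ = π ω := by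
  induction ω using reverseRecOn with
  | nil => exact ⟨[], Sublist.slnil, by simp [IsReduced], rfl⟩
  | append_singleton ω i ih =>
    obtain ⟨τ, hτω, hτ, hπ⟩ := ih
    have hτ' : ℓ (π τ) = τ.length := hτ
    rw [wordProd_append, wordProd_singleton, ← hπ]
    rcases cs.length_mul_simple (π τ) i with hup | hdown
    · refine ⟨τ ++ [i], hτω.append (Sublist.refl _), ?_,
        by rw [wordProd_append, wordProd_singleton]⟩
      show ℓ (π (τ ++ [i])) = (τ ++ [i]).length
      rw [wordProd_append, wordProd_singleton, hup, hτ', length_append, length_singleton]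
    · obtain ⟨j, hj, hjπ⟩ :=
        cs.exists_wordProd_eraseIdx_eq_mul (ω := τ) (cs.isReflection_simple i) (by omega)
      refine ⟨τ.eraseIdx j, (eraseIdx_sublist τ j).trans (hτω.trans (sublist_append_left _ _)),
        ?_, hjπ⟩
      show ℓ (π (τ.eraseIdx j)) = (τ.eraseIdx j).length
      rw [hjπ, length_eraseIdx_of_lt hj]
      omega

def BruhatStep (x y : W) : Prop := cs.IsReflection (x⁻¹ * y) ∧ ℓ x < ℓ y

def BruhatChain : W → W → Prop := Relation.ReflTransGen cs.BruhatStep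

variable {cs} in
theorem BruhatStep.simple_mul_or {y z : W} (h : cs.BruhatStep y z) (i : B) :
    cs.BruhatStep (s i * y) (s i * z) ∨ s i * y = z := by
  obtain ⟨ht, hyz⟩ := h
  set t := y⁻¹ * z
  have hzt : s i * z = s i * y * t := by simp [t, mul_assoc]
  have hrefl : cs.IsReflection ((s i * y)⁻¹ * (s i * z)) := by
    simpa [mul_assoc, cs.simple_mul_simple_cancel_left] using ht
  rcases lt_or_gt_of_ne (ht.length_mul_left_ne (s i * y)) with hdown | hup
  · right
    -- exchange in `i :: ω`: deleting a letter of `ω` instead of `i` would leave `ℓ z < ℓ y`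
    obtain ⟨ω, hω, rfl⟩ := cs.exists_isReduced y
    have hω' : ℓ (π ω) = ω.length := hω
    obtain ⟨j, hj, hjπ⟩ := cs.exists_wordProd_eraseIdx_eq_mul (ω := i :: ω) ht
      (by rwa [wordProd_cons])
    rw [wordProd_cons, ← hzt] at hjπ
    cases j with
    | zero => simpa [cs.simple_mul_simple_cancel_left] using congrArg (s i * ·) hjπ
    | succ j =>
      rw [eraseIdx_cons_succ, wordProd_cons, mul_right_inj] at hjπ
      have := cs.length_wordProd_le (ω.eraseIdx j)
      rw [hjπ, length_eraseIdx_of_lt (by simpa using hj)] at this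
      omega
  · exact Or.inl ⟨hrefl, by rwa [hzt]⟩

variable {cs} in
theorem BruhatChain.simple_mul_or {x y : W} (h : cs.BruhatChain x y) (i : B) :
    cs.BruhatChain (s i * x) y ∨ cs.BruhatChain (s i * x) (s i * y) := by
  induction h with
  | refl => exact Or.inr .refl
  | tail _ hyz ih =>
    rcases ih with h | h
    · exact Or.inl (h.tail hyz)
    · rcases hyz.simple_mul_or i with hs | heq
      · exact Or.inr (h.tail hs)
      · exact Or.inl (heq ▸ h)

theorem bruhatChain_of_sublist {ω τ : List B} (hω : cs.IsReduced ω) (h : τ <+ ω) :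
    cs.BruhatChain (π τ) (π ω) := by
  induction ω generalizing τ with
  | nil => rw [eq_nil_of_sublist_nil h]; exact .refl
  | cons i ω ih =>
    have hω' : cs.IsReduced ω := by simpa using hω.drop 1
    have hstep : cs.BruhatStep (π ω) (π (i :: ω)) := by
      refine ⟨?_, ?_⟩
      · simpa [wordProd_cons, mul_assoc] using (cs.isReflection_simple i).conj (π ω)⁻¹
      · have h₁ : ℓ (π (i :: ω)) = ω.length + 1 := hω
        have h₂ : ℓ (π ω) = ω.length := hω'
        omega
    rcases sublist_cons_iff.mp h with hτ | ⟨τ, rfl, hτ⟩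
    · exact (ih hω' hτ).tail hstep
    · rw [cs.wordProd_cons i τ]
      rcases (ih hω' hτ).simple_mul_or i with hc | hc
      · exact hc.tail hstep
      · rwa [wordProd_cons]

variable {cs} in
theorem BruhatChain.exists_sublist {u w : W} (h : cs.BruhatChain u w) {ω : List B}
    (hω : π ω = w) : ∃ τ, τ <+ ω ∧ π τ = u := by
  induction h generalizing ω with
  | refl => exact ⟨ω, .refl ω, hω⟩
  | @tail y z _ hyz ih =>
    obtain ⟨ht, hlt⟩ := hyz
    have hzy : π ω * (y⁻¹ * z) = y := by
      rw [hω]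
      calc z * (y⁻¹ * z) = z * (y⁻¹ * z)⁻¹ := by rw [ht.inv]
        _ = y := by group
    obtain ⟨j, -, hj⟩ := cs.exists_wordProd_eraseIdx_eq_mul ht (by rwa [hzy, hω])
    obtain ⟨τ, hτ, rfl⟩ := ih (hj.trans hzy)
    exact ⟨τ, hτ.trans (eraseIdx_sublist ω j), rfl⟩

end CoxeterSystem

section BruhatLE

variable [Group W] {M : CoxeterMatrix B} {cs : CoxeterSystem M W}

variable (cs) in
theorem bruhatLE_refl (w : W) : BruhatLE cs w w := by
  obtain ⟨ω, hω, rfl⟩ := cs.exists_isReduced w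
  exact ⟨ω, hω, rfl, ω, .refl ω, hω, rfl⟩

theorem bruhatLE_of_sublist {ω τ : List B} (hω : cs.IsReduced ω) (h : τ <+ ω) :
    BruhatLE cs (cs.wordProd τ) (cs.wordProd ω) := by
  obtain ⟨τ', hτ', hτ'_red, hπ⟩ := cs.exists_reduced_sublist τ
  exact ⟨ω, hω, rfl, τ', hτ'.trans h, hτ'_red, hπ⟩

theorem BruhatLE.exists_sublist {u w : W} (h : BruhatLE cs u w) {ω : List B}
    (hω : cs.wordProd ω = w) : ∃ τ, τ <+ ω ∧ cs.wordProd τ = u := by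
  obtain ⟨ω₀, hω₀, rfl, τ₀, hτ₀, -, rfl⟩ := h
  exact (cs.bruhatChain_of_sublist hω₀ hτ₀).exists_sublist hω

theorem BruhatLE.length_le {u w : W} (h : BruhatLE cs u w) : cs.length u ≤ cs.length w := by
  obtain ⟨ω, hω, rfl, τ, hτ, hτ_red, rfl⟩ := h
  rw [hω.eq, hτ_red.eq]
  exact hτ.length_le

theorem BruhatLE.antisymm {u w : W} (h₁ : BruhatLE cs u w) (h₂ : BruhatLE cs w u) : u = w := by
  have hlen := h₂.length_le
  obtain ⟨ω, hω, rfl, τ, hτ, hτ_red, rfl⟩ := h₁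
  rw [hω.eq, hτ_red.eq] at hlen
  rw [hτ.eq_of_length (le_antisymm hτ.length_le hlen)]

variable (cs) in
theorem eq_of_forall_bruhatLE_iff {u w : W} (h : ∀ x, BruhatLE cs x u ↔ BruhatLE cs x w) :
    u = w :=
  ((h u).mp (bruhatLE_refl cs u)).antisymm ((h w).mpr (bruhatLE_refl cs w))

theorem IsDemazureProd.bruhatLE_iff {w w' m x : W} (h : IsDemazureProd cs w w' m) :
    BruhatLE cs x m ↔ ∃ u u', BruhatLE cs u w ∧ BruhatLE cs u' w' ∧ x = u * u' := by
  refine ⟨fun hx => ?_, fun ⟨u, u', hu, hu', hx⟩ => hx ▸ h.2 u u' hu hu'⟩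
  obtain ⟨-, -, ⟨α, hα, rfl, α₀, hα₀, -, rfl⟩, ⟨β, hβ, rfl, β₀, hβ₀, -, rfl⟩, rfl⟩ := h.1
  obtain ⟨τ, hτ, rfl⟩ := hx.exists_sublist (cs.wordProd_append α₀ β₀)
  obtain ⟨τ₁, τ₂, rfl, h₁, h₂⟩ := sublist_append_iff.mp hτ
  exact ⟨_, _, bruhatLE_of_sublist hα (h₁.trans hα₀), bruhatLE_of_sublist hβ (h₂.trans hβ₀),
    cs.wordProd_append τ₁ τ₂⟩

end BruhatLE

theorem demazure_product_assoc [Group W] {M : CoxeterMatrix B}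
    (cs : CoxeterSystem M W) (w w' w'' d₁ d₂ d₃ d₄ : W)
    (h₁ : IsDemazureProd cs w w' d₁)
    (h₂ : IsDemazureProd cs d₁ w'' d₂)
    (h₃ : IsDemazureProd cs w' w'' d₃)
    (h₄ : IsDemazureProd cs w d₃ d₄) :
    d₂ = d₄ := by
  refine eq_of_forall_bruhatLE_iff cs fun x => ?_
  rw [h₂.bruhatLE_iff, h₄.bruhatLE_iff]
  constructor
  · rintro ⟨a, c, ha, hc, rfl⟩
    obtain ⟨a₁, a₂, ha₁, ha₂, rfl⟩ := h₁.bruhatLE_iff.mp ha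
    exact ⟨a₁, a₂ * c, ha₁, h₃.2 a₂ c ha₂ hc, mul_assoc _ _ _⟩
  · rintro ⟨a, c, ha, hc, rfl⟩
    obtain ⟨c₁, c₂, hc₁, hc₂, rfl⟩ := h₃.bruhatLE_iff.mp hc
    exact ⟨a * c₁, c₂, h₁.2 a c₁ ha hc₁, hc₂, (mul_assoc _ _ _).symm⟩
end

section
/- Let (W,S) be a finite Coxeter system, let c ∈ W be a Coxeter element, and suppose c = v₁ v₂ with v₁, v₂ ∈ W and ℓ(c) = ℓ(v₁) + ℓ(v₂). Then v₂ v₁ is also a Coxeter element of W. -/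
/-!
Let (W,S) be a finite Coxeter system, let c ∈ W be a Coxeter element, and suppose
c = v₁ v₂ with ℓ(c) = ℓ(v₁) + ℓ(v₂). Then v₂ v₁ is also a Coxeter element of W.
-/

open CoxeterSystem

variable {B : Type*} {W : Type*}

/-- A Coxeter element of a Coxeter group: a product of the simple reflections,
each occurring exactly once, in some order. -/
def IsCoxeterElement [Group W] {M : CoxeterMatrix B} (cs : CoxeterSystem M W)
    (c : W) : Prop :=
  ∃ ω : List B, ω.Nodup ∧ (∀ i : B, i ∈ ω) ∧ cs.wordProd ω = c

/-!
Induction on `ℓ(v₂)`. A right descent `s` of `v₂` is one of `c`, so `c' = s c s` is again a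
Coxeter element, of the same length as `c`, and `c' = (s v₁)(v₂ s)` is length-additive; the
induction hypothesis gives that `(v₂ s)(s v₁) = v₂ v₁` is a Coxeter element.

That `s c s` is a Coxeter element comes from a support argument in the geometric representation
on `B →₀ ℝ`, which shows that every word for a Coxeter element uses every letter.
-/

namespace Real

theorem sin_add_two_mul_eq (A θ : ℝ) :
    sin (A + 2 * θ) = 2 * cos θ * sin (A + θ) - sin A := by
  have h : sin (A + θ + θ) + sin (A + θ - θ) = 2 * cos θ * sin (A + θ) := by
    rw [sin_add, sin_sub]; ring
  rw [add_sub_cancel_right, add_assoc, ← two_mul] at h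
  linarith

theorem sin_add_three_mul_eq (A θ : ℝ) :
    sin (A + 3 * θ) = (4 * cos θ ^ 2 - 1) * sin (A + θ) - 2 * cos θ * sin A := by
  have h := sin_add_two_mul_eq (A + θ) θ
  rw [show A + θ + 2 * θ = A + 3 * θ by ring, show A + θ + θ = A + 2 * θ by ring,
    sin_add_two_mul_eq] at h
  rw [h]; ring

theorem sin_pi_div_pos {m : ℕ} (hm : 2 ≤ m) : 0 < sin (π / m) :=
  sin_pos_of_pos_of_lt_pi (by positivity) (div_lt_self pi_pos (by exact_mod_cast hm))

end Real

namespace CoxeterMatrix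

variable (M : CoxeterMatrix B)

/-- The Tits form `B(αₓ, α_y) = -cos (π / mₓᵧ)`; for `mₓᵧ = 0`, i.e. `∞`, Lean's `π / 0 = 0`
gives the standard value `-1`. -/
noncomputable def titsForm (x y : B) : ℝ := -Real.cos (Real.pi / M x y)

noncomputable def titsPairing (x : B) : (B →₀ ℝ) →ₗ[ℝ] ℝ :=
  Finsupp.linearCombination ℝ (M.titsForm x)

noncomputable def geomReflection (x : B) : Module.End ℝ (B →₀ ℝ) :=
  LinearMap.id - (2 • M.titsPairing x).smulRight (Finsupp.single x 1)

theorem titsForm_self (x : B) : M.titsForm x x = 1 := by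
  simp [titsForm]

theorem titsForm_comm (x y : B) : M.titsForm x y = M.titsForm y x := by
  rw [titsForm, titsForm, M.symmetric]

theorem titsPairing_single (x y : B) (a : ℝ) :
    M.titsPairing x (Finsupp.single y a) = a * M.titsForm x y := by
  simp [titsPairing]

theorem geomReflection_apply (x : B) (v : B →₀ ℝ) :
    M.geomReflection x v = v - (2 * M.titsPairing x v) • Finsupp.single x 1 := by
  simp [geomReflection]

theorem geomReflection_apply_of_ne {x k : B} (h : x ≠ k) (v : B →₀ ℝ) :
    M.geomReflection x v k = v k := by
  simp [geomReflection_apply, h]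

theorem geomReflection_single (x y : B) :
    M.geomReflection x (Finsupp.single y 1) =
      Finsupp.single y 1 - (2 * M.titsForm x y) • Finsupp.single x 1 := by
  rw [geomReflection_apply, titsPairing_single, one_mul]

theorem geomReflection_of_titsPairing_eq_zero {x : B} {v : B →₀ ℝ}
    (h : M.titsPairing x v = 0) : M.geomReflection x v = v := by
  simp [geomReflection_apply, h]

theorem geomReflection_mul_self (x : B) : M.geomReflection x * M.geomReflection x = 1 := by
  refine LinearMap.ext fun v => ?_
  simp only [Module.End.mul_apply, Module.End.one_apply, M.geomReflection_apply x v, map_sub,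
    map_smul, titsPairing_single, titsForm_self, M.geomReflection_apply x (Finsupp.single x 1)]
  module


section Rank2

open Finsupp

variable {M} {x y : B}

/-- On the plane spanned by `αₓ, α_y`, `sₓ s_y` is a rotation by `2θ`. -/
theorem sin_smul_geomReflection_mul_pow_single {θ : ℝ} (hθ : M.titsForm x y = -Real.cos θ)
    (t : ℕ) :
    Real.sin θ • ((M.geomReflection x * M.geomReflection y) ^ t) (single x 1) =
        Real.sin ((2 * t + 1) * θ) • single x 1 + Real.sin (2 * t * θ) • single y 1 ∧
      Real.sin θ • ((M.geomReflection x * M.geomReflection y) ^ t) (single y 1) =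
        -Real.sin (2 * t * θ) • single x 1 - Real.sin ((2 * t - 1) * θ) • single y 1 := by
  set c := Real.cos θ
  have hyx : M.titsForm y x = -c := by rw [titsForm_comm, hθ]
  set g := M.geomReflection x * M.geomReflection y
  have hgx : g (single x 1) = (4 * c ^ 2 - 1) • single x 1 + (2 * c) • single y 1 := by
    simp only [g, Module.End.mul_apply, geomReflection_single, map_sub, map_smul, hθ, hyx,
      titsForm_self]
    module
  have hgy : g (single y 1) = (-(2 * c)) • single x 1 - single y 1 := by
    simp only [g, Module.End.mul_apply, geomReflection_single, map_sub, map_smul, hθ,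
      titsForm_self]
    module
  clear_value g
  induction t with
  | zero => simp
  | succ t ih =>
    simp only [pow_succ', Module.End.mul_apply, ← map_smul g, ih.1, ih.2]
    push_cast
    rw [show (2 * (t + 1) + 1) * θ = 2 * t * θ + 3 * θ by ring,
      show 2 * (t + 1) * θ = 2 * t * θ + 2 * θ by ring,
      show (2 * (t + 1) - 1) * θ = (2 * t - 1) * θ + 2 * θ by ring,
      Real.sin_add_three_mul_eq, Real.sin_add_two_mul_eq, Real.sin_add_two_mul_eq,
      show 2 * t * θ + θ = (2 * t + 1) * θ by ring, show (2 * t - 1) * θ + θ = 2 * t * θ by ring]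
    have hodd : Real.sin ((2 * t + 1) * θ) = 2 * c * Real.sin (2 * t * θ) -
        Real.sin ((2 * t - 1) * θ) := by
      have h := Real.sin_add_two_mul_eq ((2 * t - 1) * θ) θ
      rwa [show (2 * t - 1) * θ + 2 * θ = (2 * t + 1) * θ by ring,
        show (2 * t - 1) * θ + θ = 2 * t * θ by ring] at h
    simp only [map_add, map_sub, map_smul, hgx, hgy]
    refine ⟨by module, ?_⟩
    rw [hodd]
    module

theorem geomReflection_mul_pow_single (hm : 2 ≤ M x y) :
    ((M.geomReflection x * M.geomReflection y) ^ M x y) (single x 1) = single x 1 ∧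
      ((M.geomReflection x * M.geomReflection y) ^ M x y) (single y 1) = single y 1 := by
  set m := M x y
  set θ := Real.pi / m
  have hmθ : m * θ = Real.pi := mul_div_cancel₀ _ (by positivity)
  have h₁ : Real.sin ((2 * m + 1) * θ) = Real.sin θ := by
    rw [show (2 * m + 1) * θ = θ + 2 * Real.pi by linear_combination 2 * hmθ,
      Real.sin_add_two_pi]
  have h₂ : Real.sin (2 * m * θ) = 0 := by
    rw [show 2 * m * θ = 2 * Real.pi by linear_combination 2 * hmθ, Real.sin_two_pi]
  have h₃ : Real.sin ((2 * m - 1) * θ) = -Real.sin θ := by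
    rw [show (2 * m - 1) * θ = 2 * Real.pi - θ by linear_combination 2 * hmθ,
      Real.sin_two_pi_sub]
  obtain ⟨hx, hy⟩ := sin_smul_geomReflection_mul_pow_single (M := M) (θ := θ) rfl m
  rw [h₁, h₂] at hx
  rw [h₂, h₃] at hy
  have hsin := (Real.sin_pi_div_pos hm).ne'
  exact ⟨smul_right_injective _ hsin (hx.trans (by module)),
    smul_right_injective _ hsin (hy.trans (by module))⟩

theorem exists_titsPairing_sub_eq_zero (h : M.titsForm x y ^ 2 ≠ 1) (v : B →₀ ℝ) :
    ∃ a b : ℝ, M.titsPairing x (v - a • single x 1 - b • single y 1) = 0 ∧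
      M.titsPairing y (v - a • single x 1 - b • single y 1) = 0 := by
  set k := M.titsForm x y
  have hk : 1 - k ^ 2 ≠ 0 := sub_ne_zero.mpr h.symm
  have hyx : M.titsForm y x = k := titsForm_comm ..
  refine ⟨(M.titsPairing x v - k * M.titsPairing y v) / (1 - k ^ 2),
    (M.titsPairing y v - k * M.titsPairing x v) / (1 - k ^ 2), ?_, ?_⟩ <;>
  · simp only [map_sub, map_smul, titsPairing_single, titsForm_self, smul_eq_mul, hyx]
    field_simp
    ring

theorem geomReflection_mul_pow_eq_one (hm : 2 ≤ M x y) :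
    (M.geomReflection x * M.geomReflection y) ^ M x y = 1 := by
  obtain ⟨hx, hy⟩ := geomReflection_mul_pow_single hm
  have hk : M.titsForm x y ^ 2 ≠ 1 := by
    rw [titsForm, neg_sq, Real.cos_sq']
    nlinarith [Real.sin_pi_div_pos hm]
  set g := M.geomReflection x * M.geomReflection y
  refine LinearMap.ext fun v => ?_
  rw [Module.End.one_apply]
  obtain ⟨a, b, hrx, hry⟩ := exists_titsPairing_sub_eq_zero hk v
  set r := v - a • single x (1 : ℝ) - b • single y (1 : ℝ)
  have hgr : g r = r := by
    rw [Module.End.mul_apply, M.geomReflection_of_titsPairing_eq_zero hry,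
      M.geomReflection_of_titsPairing_eq_zero hrx]
  have hr : (g ^ M x y) r = r :=
    (Module.End.pow_apply g _ r).trans (Function.IsFixedPt.iterate hgr _)
  calc (g ^ M x y) v = (g ^ M x y) (r + a • single x 1 + b • single y 1) := by
        congr 1; simp only [r]; abel
    _ = v := by rw [map_add, map_add, map_smul, map_smul, hr, hx, hy]; simp only [r]; abel

end Rank2

theorem isLiftable_geomReflection : M.IsLiftable M.geomReflection := by
  intro x y
  rcases eq_or_ne x y with rfl | hxy
  · rw [M.diagonal, pow_one, geomReflection_mul_self]
  rcases Nat.lt_or_ge (M x y) 2 with hm | hm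
  · obtain h0 : M x y = 0 := by have := M.off_diagonal x y hxy; omega
    rw [h0, pow_zero]
  · exact geomReflection_mul_pow_eq_one hm

end CoxeterMatrix

namespace CoxeterSystem

variable [Group W] {M : CoxeterMatrix B} (cs : CoxeterSystem M W)

noncomputable def geomRep : W →* Module.End ℝ (B →₀ ℝ) :=
  cs.lift ⟨M.geomReflection, M.isLiftable_geomReflection⟩

theorem geomRep_simple (i : B) : cs.geomRep (cs.simple i) = M.geomReflection i :=
  cs.lift_apply_simple _ i

variable {cs}

theorem geomRep_wordProd_apply_of_notMem {ω : List B} {k : B} (hk : k ∉ ω) (v : B →₀ ℝ) :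
    cs.geomRep (cs.wordProd ω) v k = v k := by
  induction ω with
  | nil => simp
  | cons i ω ih =>
    rw [List.mem_cons, not_or] at hk
    rw [wordProd_cons, map_mul, Module.End.mul_apply, geomRep_simple,
      M.geomReflection_apply_of_ne (Ne.symm hk.1), ih hk.2]

/-- The `k`-th coordinate is preserved by every word avoiding `k`, but not by a word using `k`
exactly once, since `titsPairing k ≠ 0`. -/
theorem mem_of_wordProd_eq {α β ρ : List B} {k : B} (hα : k ∉ α) (hβ : k ∉ β)
    (h : cs.wordProd (α ++ k :: β) = cs.wordProd ρ) : k ∈ ρ := by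
  by_contra hkρ
  set u : B →₀ ℝ := cs.geomRep (cs.wordProd β.reverse) (Finsupp.single k 1)
  have hu : cs.geomRep (cs.wordProd β) u = Finsupp.single k 1 := by
    rw [← Module.End.mul_apply, ← map_mul, wordProd_reverse, mul_inv_cancel, map_one,
      Module.End.one_apply]
  have huk : u k = 1 := by
    rw [geomRep_wordProd_apply_of_notMem (List.mem_reverse.not.mpr hβ), Finsupp.single_eq_same]
  have hcoord := congrArg (fun w => cs.geomRep w u k) h
  simp only [wordProd_append, wordProd_cons, map_mul, Module.End.mul_apply,
    geomRep_wordProd_apply_of_notMem hα, geomRep_wordProd_apply_of_notMem hkρ, geomRep_simple,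
    hu, huk, M.geomReflection_single, M.titsForm_self] at hcoord
  norm_num at hcoord

theorem subperm_of_wordProd_eq {ω ρ : List B} (hω : ω.Nodup)
    (h : cs.wordProd ω = cs.wordProd ρ) : ω.Subperm ρ := by
  refine hω.subperm fun k hk => ?_
  obtain ⟨α, β, rfl⟩ := List.append_of_mem hk
  have hkαβ := (List.nodup_cons.mp (List.nodup_middle.mp hω)).1
  rw [List.mem_append, not_or] at hkαβ
  exact mem_of_wordProd_eq hkαβ.1 hkαβ.2 h

theorem isReduced_of_nodup {ω : List B} (hω : ω.Nodup) : cs.IsReduced ω := by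
  obtain ⟨ρ, hρ, hρω⟩ := cs.exists_isReduced (cs.wordProd ω)
  refine le_antisymm (cs.length_wordProd_le ω) ?_
  rw [hρω, hρ.eq]
  exact (subperm_of_wordProd_eq hω hρω).length_le

end CoxeterSystem

namespace IsCoxeterElement

variable [Group W] {M : CoxeterMatrix B} {cs : CoxeterSystem M W} {c : W}

theorem length_eq {c' : W} (hc : IsCoxeterElement cs c) (hc' : IsCoxeterElement cs c') :
    cs.length c = cs.length c' := by
  obtain ⟨ω, hω, hωB, rfl⟩ := hc
  obtain ⟨ω', hω', hω'B, rfl⟩ := hc'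
  rw [(isReduced_of_nodup hω).eq, (isReduced_of_nodup hω').eq,
    ((List.perm_ext_iff_of_nodup hω hω').2 fun i => iff_of_true (hωB i) (hω'B i)).length_eq]

/-- A reduced word `ρ` for `c * s i`, followed by `i`, is a word for `c` of minimal length; as it
contains every letter of a Coxeter word for `c`, it is itself a Coxeter word, and so is
`i :: ρ`. -/
theorem simple_mul_mul_simple (hc : IsCoxeterElement cs c) {i : B}
    (hi : cs.IsRightDescent c i) : IsCoxeterElement cs (cs.simple i * c * cs.simple i) := by
  obtain ⟨ω, hω, hωB, rfl⟩ := hc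
  obtain ⟨ρ, hρ, hρω⟩ := cs.exists_isReduced (cs.wordProd ω * cs.simple i)
  have hprod : cs.wordProd ω = cs.wordProd (ρ ++ [i]) := by
    rw [wordProd_append, wordProd_singleton, ← hρω, simple_mul_simple_cancel_right]
  have hlen : (ρ ++ [i]).length ≤ ω.length := by
    rw [List.length_append, List.length_singleton, ← hρ.eq, ← hρω,
      ← (isReduced_of_nodup (cs := cs) hω).eq]
    exact (cs.isRightDescent_iff.mp hi).le
  have hperm : ω.Perm (i :: ρ) :=
    ((subperm_of_wordProd_eq hω hprod).perm_of_length_le hlen).trans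
      (List.perm_append_singleton i ρ)
  refine ⟨i :: ρ, hperm.nodup_iff.mp hω, fun j => hperm.mem_iff.mp (hωB j), ?_⟩
  rw [wordProd_cons, ← hρω, mul_assoc]

end IsCoxeterElement

theorem coxeter_element_of_length_additive_factorization_general [Group W]
    {M : CoxeterMatrix B} (cs : CoxeterSystem M W) (c v₁ v₂ : W)
    (hc : IsCoxeterElement cs c) (heq : c = v₁ * v₂)
    (hl : cs.length c = cs.length v₁ + cs.length v₂) :
    IsCoxeterElement cs (v₂ * v₁) := by
  induction hn : cs.length v₂ generalizing c v₁ v₂ with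
  | zero =>
    rw [cs.length_eq_zero_iff.mp hn, mul_one] at heq
    rwa [cs.length_eq_zero_iff.mp hn, one_mul, ← heq]
  | succ n ih =>
    obtain ⟨i, hi⟩ := cs.exists_rightDescent_of_ne_one (w := v₂) (by rintro rfl; simp at hn)
    have hv₂ := cs.isRightDescent_iff.mp hi
    have hci : cs.IsRightDescent c i :=
      calc cs.length (c * cs.simple i)
          = cs.length (v₁ * (v₂ * cs.simple i)) := by rw [heq, mul_assoc]
        _ ≤ cs.length v₁ + cs.length (v₂ * cs.simple i) := cs.length_mul_le _ _
        _ < cs.length c := by omega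
    have hfac : cs.simple i * c * cs.simple i = (cs.simple i * v₁) * (v₂ * cs.simple i) := by
      rw [heq]; group
    have hc' := hc.simple_mul_mul_simple hci
    have hl' : cs.length (cs.simple i * c * cs.simple i) =
        cs.length (cs.simple i * v₁) + cs.length (v₂ * cs.simple i) := by
      have hlen := hc'.length_eq hc
      have hle := hfac ▸ cs.length_mul_le (cs.simple i * v₁) (v₂ * cs.simple i)
      have hv₁ := cs.length_simple_mul v₁ i
      omega
    simpa [mul_assoc] using ih _ _ _ hc' hfac hl' (by omega)

theorem coxeter_element_of_length_additive_factorization [Group W] [Finite W]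
    {M : CoxeterMatrix B} (cs : CoxeterSystem M W) (c v₁ v₂ : W)
    (hc : IsCoxeterElement cs c) (heq : c = v₁ * v₂)
    (hl : cs.length c = cs.length v₁ + cs.length v₂) :
    IsCoxeterElement cs (v₂ * v₁) :=
  coxeter_element_of_length_additive_factorization_general cs c v₁ v₂ hc heq hl
end
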